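/- arXiv:math/0504388 — 2 statements merged into one kernel-verified Lean document; each statement's English description precedes it below -/
import Mathlib

section
/- For every prime p and every integer k with p+2 ≤ k ≤ 2p−1, write (λ₋ · λ₊⁻¹)^{k−1} = Σ_{i≥0} c_i X^i in ℚ_p[[X]]. Then c_i ∈ ℤ_p for every i with 0 ≤ i ≤ p−2, and c_{p−1} − (k−1)/p ∈ ℤ_p. (This is the coefficientwise form of the paper's lemma: if v_p(a_p) = 1, α is the part of degree ≤ k−2 of a_p(λ₋/λ₊)^{k−1}, and β is the residue of (a_p/p)·(k−1), then the reduction of α modulo the maximal ideal equals β·u(X)·X^{p−1} for some u ∈ 1 + X·k_L[[X]].) -/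
open PowerSeries

/-- `qSeries p n` is the polynomial
`q_n = ((1+X)^(p^n) - 1)/((1+X)^(p^(n-1)) - 1) = Φ_p((1+X)^(p^(n-1)))`,
viewed as a power series over `ℚ_p`. -/
noncomputable def qSeries (p : ℕ) [Fact p.Prime] (n : ℕ) : PowerSeries ℚ_[p] :=
  ∑ j ∈ Finset.range p, ((1 + PowerSeries.X) ^ (p ^ (n - 1))) ^ j

/-- The product topology of coefficientwise convergence on `ℚ_p[[X]]`. -/
noncomputable def coeffTopology (p : ℕ) [Fact p.Prime] :
    TopologicalSpace (PowerSeries ℚ_[p]) :=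
  TopologicalSpace.induced (fun f n => (PowerSeries.coeff (R := ℚ_[p]) n) f) Pi.topologicalSpace

/-- `λ₊ = ∏_{n ≥ 1} q_{2n}/p` in `ℚ_p[[X]]`. -/
noncomputable def lambdaPlus (p : ℕ) [Fact p.Prime] : PowerSeries ℚ_[p] :=
  letI := coeffTopology p
  ∏' n : ℕ, ((p : ℚ_[p])⁻¹ • qSeries p (2 * (n + 1)))

/-- `λ₋ = ∏_{n ≥ 1} q_{2n-1}/p` in `ℚ_p[[X]]`. -/
noncomputable def lambdaMinus (p : ℕ) [Fact p.Prime] : PowerSeries ℚ_[p] :=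
  letI := coeffTopology p
  ∏' n : ℕ, ((p : ℚ_[p])⁻¹ • qSeries p (2 * n + 1))

/-!
Write `F ≡ G` when `F - G` has coefficients in `ℤ_p` in degrees `≤ p - 1`. For `i < p` the
identity `i · C(N, i) = N · C(N - 1, i - 1)` shows that the coefficients of `q_n / p` in degrees
`1, …, p - 1` are divisible by `p ^ (n - 2)`, so `q_n / p ≡ 1` for `n ≥ 2`, while
`q / p ≡ 1 + X^(p-1)/p` because `p ∣ C(p, i + 1)` for `i < p - 1`. The factors `q_n / p` tend
to `1` coefficientwise, which in the ultrametric setting makes the infinite products converge,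
and the congruences pass to the limit: `λ₊ ≡ 1` and `λ₋ ≡ 1 + X^(p-1)/p`. Finally
`(1 + uX^m)(1 + vX^m) ≡ 1 + (u + v)X^m` modulo terms of degree `> m`, so
`(λ₋ λ₊⁻¹)^(k-1) ≡ 1 + (k - 1)/p · X^(p-1)`.
-/

open Filter Topology Finset

section NormedCommRing

variable {R : Type*} [NormedCommRing R]

def CoeffNormLE (m : ℕ) (a : ℝ) (F : R⟦X⟧) : Prop :=
  ∀ i ≤ m, ‖coeff i F‖ ≤ a

def CongrOneAddMonomial (m : ℕ) (c : R) (F : R⟦X⟧) : Prop :=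
  constantCoeff F = 1 ∧ CoeffNormLE m 1 (F - C c * X ^ m)

theorem CoeffNormLE.mono {m : ℕ} {a b : ℝ} {F : R⟦X⟧} (h : CoeffNormLE m a F) (hab : a ≤ b) :
    CoeffNormLE m b F :=
  fun i hi => (h i hi).trans hab

theorem exists_coeffNormLE (m : ℕ) (F : R⟦X⟧) : ∃ K, CoeffNormLE m K F :=
  ⟨∑ i ∈ range (m + 1), ‖coeff i F‖, fun i hi =>
    single_le_sum (f := fun i => ‖coeff i F‖) (fun _ _ => norm_nonneg _) (mem_range.2 (by omega))⟩

theorem coeffNormLE_X_pow_mul {m : ℕ} {a : ℝ} (ha : 0 ≤ a) {F : R⟦X⟧}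
    (hF : constantCoeff F = 0) : CoeffNormLE m a (X ^ m * F) := by
  intro i hi
  rw [coeff_X_pow_mul']
  split_ifs with h
  · rwa [show i - m = 0 by omega, coeff_zero_eq_constantCoeff_apply, hF, norm_zero]
  · rwa [norm_zero]

namespace CongrOneAddMonomial

variable {m : ℕ} {c : R} {F : R⟦X⟧}

theorem zero_iff : CongrOneAddMonomial m 0 F ↔ constantCoeff F = 1 ∧ CoeffNormLE m 1 F := by
  simp [CongrOneAddMonomial]

theorem norm_coeff_le (h : CongrOneAddMonomial m c F) {i : ℕ} (hi : i < m) :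
    ‖coeff i F‖ ≤ 1 := by
  simpa [coeff_C_mul_X_pow, hi.ne] using h.2 i hi.le

theorem norm_coeff_sub_le (h : CongrOneAddMonomial m c F) : ‖coeff m F - c‖ ≤ 1 := by
  simpa [coeff_C_mul_X_pow] using h.2 m le_rfl

theorem one [NormOneClass R] (m : ℕ) : CongrOneAddMonomial m 0 (1 : R⟦X⟧) :=
  zero_iff.2 ⟨map_one _, fun i _ => by rw [coeff_one]; split_ifs <;> simp⟩

end CongrOneAddMonomial

variable [IsUltrametricDist R]

namespace CoeffNormLE

variable {m : ℕ} {a b : ℝ} {F G : R⟦X⟧}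

theorem add (hF : CoeffNormLE m a F) (hG : CoeffNormLE m a G) : CoeffNormLE m a (F + G) :=
  fun i hi => by
    rw [map_add]
    exact (IsUltrametricDist.norm_add_le_max _ _).trans (max_le (hF i hi) (hG i hi))

theorem mul (hF : CoeffNormLE m a F) (hG : CoeffNormLE m b G) :
    CoeffNormLE m (a * b) (F * G) := by
  intro i hi
  have ha : 0 ≤ a := (norm_nonneg _).trans (hF 0 m.zero_le)
  have hb : 0 ≤ b := (norm_nonneg _).trans (hG 0 m.zero_le)
  rw [coeff_mul]
  refine IsUltrametricDist.norm_sum_le_of_forall_le_of_nonneg (mul_nonneg ha hb) fun x hx => ?_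
  have hx := mem_antidiagonal.1 hx
  exact (norm_mul_le _ _).trans
    (mul_le_mul (hF _ (by omega)) (hG _ (by omega)) (norm_nonneg _) ha)

theorem mul_sub_one (ha₁ : a ≤ 1) (hF : CoeffNormLE m a (F - 1)) (hG : CoeffNormLE m a (G - 1)) :
    CoeffNormLE m a (F * G - 1) := by
  have ha : 0 ≤ a := (norm_nonneg _).trans (hF 0 m.zero_le)
  rw [show F * G - 1 = (F - 1) * (G - 1) + (F - 1) + (G - 1) by ring]
  exact (((hF.mul hG).mono (mul_le_of_le_one_left ha ha₁)).add hF).add hG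

end CoeffNormLE

theorem coeffNormLE_prod_sub_one {ι : Type*} {s : Finset ι} {f : ι → R⟦X⟧} {m : ℕ} {a : ℝ}
    (ha₀ : 0 ≤ a) (ha₁ : a ≤ 1) (hf : ∀ i ∈ s, CoeffNormLE m a (f i - 1)) :
    CoeffNormLE m a (∏ i ∈ s, f i - 1) :=
  prod_induction f (fun F => CoeffNormLE m a (F - 1)) (fun _ _ hF hG => hF.mul_sub_one ha₁ hG)
    (fun i _ => by simpa using ha₀) hf

namespace CongrOneAddMonomial

variable {m : ℕ} {c u v : R} {F G : R⟦X⟧}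

theorem mul (hm : 1 ≤ m) (hF : CongrOneAddMonomial m u F) (hG : CongrOneAddMonomial m v G) :
    CongrOneAddMonomial m (u + v) (F * G) := by
  refine ⟨by rw [map_mul, hF.1, hG.1, one_mul], ?_⟩
  -- `F - 1` and `G - 1` have no constant term, so the cross terms vanish up to degree `m`
  have key : F * G - C (u + v) * X ^ m = (F - C u * X ^ m) * (G - C v * X ^ m) +
      X ^ m * (C v * (F - 1) + C u * (G - 1) - C u * C v * X ^ m) := by
    rw [map_add]; ring
  rw [key]
  refine ((hF.2.mul hG.2).mono (mul_one 1).le).add (coeffNormLE_X_pow_mul zero_le_one ?_)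
  simp [hF.1, hG.1, zero_pow (by omega : m ≠ 0)]

theorem pow [NormOneClass R] (hm : 1 ≤ m) (hF : CongrOneAddMonomial m c F) :
    ∀ K : ℕ, CongrOneAddMonomial m (K * c) (F ^ K)
  | 0 => by simpa using one m
  | K + 1 => by
    rw [pow_succ, Nat.cast_succ, add_one_mul]
    exact (pow hm hF K).mul hm hF

theorem prod [NormOneClass R] {ι : Type*} {s : Finset ι} {f : ι → R⟦X⟧} (hm : 1 ≤ m)
    (hf : ∀ i ∈ s, CongrOneAddMonomial m 0 (f i)) : CongrOneAddMonomial m 0 (∏ i ∈ s, f i) :=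
  prod_induction f _ (fun _ _ hF hG => by simpa using hF.mul hm hG) (one m) hf

end CongrOneAddMonomial

end NormedCommRing

section Field

variable {K : Type*} [NormedField K] [IsUltrametricDist K] {m : ℕ} {F : K⟦X⟧}

theorem CoeffNormLE.inv (h₀ : constantCoeff F = 1) (hF : CoeffNormLE m 1 F) :
    CoeffNormLE m 1 F⁻¹ := by
  intro i hi
  induction i using Nat.strong_induction_on with
  | _ i ih =>
    rcases i.eq_zero_or_pos with rfl | hpos
    · simp [h₀]
    rw [coeff_inv, if_neg hpos.ne', h₀, inv_one, neg_one_mul, norm_neg]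
    refine IsUltrametricDist.norm_sum_le_of_forall_le_of_nonneg zero_le_one fun x hx => ?_
    have hx := mem_antidiagonal.1 hx
    split_ifs with hlt
    · exact (norm_mul_le _ _).trans
        (mul_le_one₀ (hF _ (by omega)) (norm_nonneg _) (ih _ hlt (by omega)))
    · simp

theorem CongrOneAddMonomial.inv (hF : CongrOneAddMonomial m 0 F) :
    CongrOneAddMonomial m 0 F⁻¹ := by
  rw [zero_iff] at hF ⊢
  exact ⟨by rw [constantCoeff_inv, hF.1, inv_one], hF.2.inv hF.1⟩

end Field

theorem Nat.sum_range_choose_eq_choose_add_one (n k : ℕ) :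
    ∑ j ∈ range n, j.choose k = n.choose (k + 1) := by
  induction n with
  | zero => simp
  | succ n ih => rw [sum_range_succ, ih, Nat.choose_succ_succ', add_comm]

section Padic

variable {p : ℕ} [Fact p.Prime]

attribute [local instance] coeffTopology

theorem tendsto_coeffTopology_iff {ι : Type*} {l : Filter ι} {F : ι → ℚ_[p]⟦X⟧} {L : ℚ_[p]⟦X⟧} :
    Tendsto F l (𝓝 L) ↔ ∀ i, Tendsto (fun s => coeff i (F s)) l (𝓝 (coeff i L)) := by
  rw [coeffTopology, nhds_induced, tendsto_comap_iff, tendsto_pi_nhds]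
  rfl

theorem continuous_coeff (i : ℕ) : Continuous (coeff (R := ℚ_[p]) i) :=
  continuous_iff_continuousAt.2 fun _ => tendsto_coeffTopology_iff.1 tendsto_id i

theorem isClosed_setOf_congrOneAddMonomial (m : ℕ) (c : ℚ_[p]) :
    IsClosed {F : ℚ_[p]⟦X⟧ | CongrOneAddMonomial m c F} := by
  simp only [CongrOneAddMonomial, CoeffNormLE, Set.ofPred_and, Set.ofPred_forall,
    ← coeff_zero_eq_constantCoeff_apply]
  refine (isClosed_eq (continuous_coeff 0) continuous_const).inter
    (isClosed_iInter fun i => isClosed_iInter fun _ => isClosed_le ?_ continuous_const)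
  exact ((continuous_coeff i).sub continuous_const).norm

theorem eventually_coeffNormLE_sub_one {ι : Type*} {l : Filter ι} {f : ι → ℚ_[p]⟦X⟧}
    (hf : Tendsto f l (𝓝 1)) (m : ℕ) {a : ℝ} (ha : 0 < a) :
    ∀ᶠ n in l, CoeffNormLE m a (f n - 1) := by
  refine (eventually_all_finite (Set.finite_Iic m)).2 fun i _ => ?_
  have h := (((continuous_coeff i).tendsto 1).comp hf).sub_const (coeff i 1)
  rw [sub_self] at h
  simpa using h.norm.eventually_le_const (by simpa using ha)

theorem exists_coeffNormLE_prod_sub_one {f : ℕ → ℚ_[p]⟦X⟧} (hf : Tendsto f atTop (𝓝 1)) (m : ℕ)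
    {a : ℝ} (ha : 0 < a) (ha₁ : a ≤ 1) :
    ∃ N, ∀ s : Finset ℕ, (∀ n ∈ s, N ≤ n) → CoeffNormLE m a (∏ n ∈ s, f n - 1) := by
  obtain ⟨N, hN⟩ := eventually_atTop.1 (eventually_coeffNormLE_sub_one hf m ha)
  exact ⟨N, fun s hs => coeffNormLE_prod_sub_one ha.le ha₁ fun n hn => hN n (hs n hn)⟩

theorem cauchySeq_coeff_prod {f : ℕ → ℚ_[p]⟦X⟧} (hf : Tendsto f atTop (𝓝 1)) (m : ℕ) :
    CauchySeq fun s : Finset ℕ => coeff m (∏ n ∈ s, f n) := by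
  have hsplit (N : ℕ) (s : Finset ℕ) (hs : range N ⊆ s) :
      ∏ n ∈ s, f n - ∏ n ∈ range N, f n = (∏ n ∈ s \ range N, f n - 1) * ∏ n ∈ range N, f n := by
    rw [sub_one_mul, prod_sdiff hs]
  have hsdiff (N : ℕ) (s : Finset ℕ) : ∀ n ∈ s \ range N, N ≤ n := fun n hn => by
    simpa using (mem_sdiff.1 hn).2
  obtain ⟨N₀, hN₀⟩ := exists_coeffNormLE_prod_sub_one hf m one_pos le_rfl
  obtain ⟨K, hK⟩ := exists_coeffNormLE m (∏ n ∈ range N₀, f n)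
  have hK₀ : 0 ≤ K := (norm_nonneg _).trans (hK 0 m.zero_le)
  have hbound (s : Finset ℕ) (hs : range N₀ ⊆ s) : CoeffNormLE m K (∏ n ∈ s, f n) := by
    have h := (((hN₀ _ (hsdiff N₀ s)).mul hK).mono (one_mul K).le).add hK
    rwa [← hsplit N₀ s hs, sub_add_cancel] at h
  rw [Metric.cauchySeq_iff']
  intro ε hε
  obtain ⟨a, ha, hKa⟩ := exists_pos_mul_lt hε K
  obtain ⟨N, hN⟩ := exists_coeffNormLE_prod_sub_one hf m (lt_min ha one_pos) (min_le_right a 1)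
  refine ⟨range (max N N₀), fun s hs => ?_⟩
  have h := (hN _ fun n hn => (le_max_left N N₀).trans (hsdiff _ s n hn)).mul
    (hbound _ (range_subset_range.2 (le_max_right N N₀))) m le_rfl
  rw [← hsplit _ _ hs, map_sub, ← dist_eq_norm] at h
  calc _ ≤ min a 1 * K := h
    _ ≤ a * K := mul_le_mul_of_nonneg_right (min_le_left a 1) hK₀
    _ < ε := by rwa [mul_comm]

theorem multipliable_of_tendsto_one {f : ℕ → ℚ_[p]⟦X⟧} (hf : Tendsto f atTop (𝓝 1)) :
    Multipliable f := by
  choose c hc using fun m => cauchySeq_tendsto_of_complete (cauchySeq_coeff_prod hf m)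
  exact ⟨mk c, tendsto_coeffTopology_iff.2 fun m => by simpa using hc m⟩

theorem coeff_qSeries (n i : ℕ) :
    coeff i (qSeries p n) = ((∑ j ∈ range p, (p ^ (n - 1) * j).choose i : ℕ) : ℚ_[p]) := by
  have h (N : ℕ) :
      ((1 + X) ^ N : ℚ_[p]⟦X⟧) = (((1 + Polynomial.X) ^ N : Polynomial ℚ_[p]) : ℚ_[p]⟦X⟧) := by
    simp
  simp only [qSeries, map_sum, Nat.cast_sum]
  refine sum_congr rfl fun j _ => ?_
  rw [← pow_mul, h, Polynomial.coeff_coe, Polynomial.coeff_one_add_X_pow]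

theorem constantCoeff_qSeries (n : ℕ) : constantCoeff (qSeries p n) = p := by
  simp [← coeff_zero_eq_constantCoeff_apply, coeff_qSeries]

theorem norm_coeff_qSeries_le (n : ℕ) {i : ℕ} (hi : i ≠ 0) :
    ‖coeff i (qSeries p (n + 1))‖ ≤ ‖(p : ℚ_[p]) ^ n‖ / ‖(i : ℚ_[p])‖ := by
  obtain ⟨i, rfl⟩ := Nat.exists_eq_succ_of_ne_zero hi
  have key : (i + 1) * ∑ j ∈ range p, (p ^ n * j).choose (i + 1) =
      p ^ n * ∑ j ∈ range p, j * (p ^ n * j - 1).choose i := by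
    simp only [mul_sum, ← mul_assoc]
    refine sum_congr rfl fun j _ => ?_
    rcases Nat.eq_zero_or_pos (p ^ n * j) with h | h
    · simp [h]
    · obtain ⟨N, hN⟩ := Nat.exists_eq_add_of_lt h
      rw [zero_add] at hN
      rw [hN, Nat.add_sub_cancel, mul_comm, ← Nat.add_one_mul_choose_eq]
  rw [le_div_iff₀ (norm_pos_iff.2 (Nat.cast_ne_zero.2 hi)), mul_comm, ← norm_mul,
    coeff_qSeries, Nat.add_sub_cancel, ← Nat.cast_mul, key, Nat.cast_mul, Nat.cast_pow, norm_mul]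
  exact mul_le_of_le_one_right (norm_nonneg _) (IsUltrametricDist.norm_natCast_le_one _ _)

theorem coeff_qSeries_one (i : ℕ) : coeff i (qSeries p 1) = (p.choose (i + 1) : ℚ_[p]) := by
  simp [coeff_qSeries, Nat.sum_range_choose_eq_choose_add_one]

theorem constantCoeff_inv_smul_qSeries (n : ℕ) :
    constantCoeff ((p : ℚ_[p])⁻¹ • qSeries p n) = 1 := by
  rw [← coeff_zero_eq_constantCoeff_apply, coeff_smul, coeff_zero_eq_constantCoeff_apply,
    constantCoeff_qSeries, smul_eq_mul,
    inv_mul_cancel₀ (Nat.cast_ne_zero.2 (Fact.out : p.Prime).ne_zero)]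

theorem congr_inv_smul_qSeries_one :
    CongrOneAddMonomial (p - 1) (p : ℚ_[p])⁻¹ ((p : ℚ_[p])⁻¹ • qSeries p 1) := by
  have hp := (Fact.out : p.Prime)
  refine ⟨constantCoeff_inv_smul_qSeries 1, fun i hi => ?_⟩
  rw [map_sub, coeff_smul, coeff_qSeries_one, coeff_C_mul_X_pow, smul_eq_mul]
  rcases hi.lt_or_eq with hi | rfl
  · obtain ⟨d, hd⟩ := hp.dvd_choose_self (k := i + 1) (by omega) (by omega)
    rw [if_neg hi.ne, sub_zero, hd, Nat.cast_mul,
      inv_mul_cancel_left₀ (Nat.cast_ne_zero.2 hp.ne_zero)]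
    exact IsUltrametricDist.norm_natCast_le_one _ _
  · simp [Nat.sub_add_cancel hp.one_le]

theorem congr_inv_smul_qSeries {n : ℕ} (hn : 2 ≤ n) :
    CongrOneAddMonomial (p - 1) 0 ((p : ℚ_[p])⁻¹ • qSeries p n) := by
  have hp := (Fact.out : p.Prime)
  obtain ⟨n, rfl⟩ := Nat.exists_eq_add_of_le' hn
  refine CongrOneAddMonomial.zero_iff.2 ⟨constantCoeff_inv_smul_qSeries _, fun i hi => ?_⟩
  rcases Nat.eq_zero_or_pos i with rfl | hi₀
  · rw [coeff_zero_eq_constantCoeff_apply, constantCoeff_inv_smul_qSeries, norm_one]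
  have hunit : ‖(i : ℚ_[p])‖ = 1 := Padic.norm_natCast_eq_one_iff.2
    (hp.coprime_iff_not_dvd.2 (Nat.not_dvd_of_pos_of_lt hi₀ (by omega)))
  calc ‖coeff i ((p : ℚ_[p])⁻¹ • qSeries p (n + 1 + 1))‖
      = ‖(p : ℚ_[p])⁻¹‖ * ‖coeff i (qSeries p (n + 1 + 1))‖ := by
        rw [coeff_smul, smul_eq_mul, norm_mul]
    _ ≤ ‖(p : ℚ_[p])⁻¹‖ * ‖(p : ℚ_[p]) ^ (n + 1)‖ := by
        gcongr
        simpa [hunit] using norm_coeff_qSeries_le (p := p) (n + 1) hi₀.ne'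
    _ = ‖((p ^ n : ℕ) : ℚ_[p])‖ := by
        rw [← norm_mul, pow_succ', inv_mul_cancel_left₀ (Nat.cast_ne_zero.2 hp.ne_zero),
          Nat.cast_pow]
    _ ≤ 1 := IsUltrametricDist.norm_natCast_le_one _ _

theorem tendsto_inv_smul_qSeries :
    Tendsto (fun n => (p : ℚ_[p])⁻¹ • qSeries p n) atTop (𝓝 1) := by
  refine tendsto_coeffTopology_iff.2 fun i => (tendsto_add_atTop_iff_nat 1).1 ?_
  rcases Nat.eq_zero_or_pos i with rfl | hi
  · simp only [coeff_zero_eq_constantCoeff_apply, constantCoeff_inv_smul_qSeries, map_one]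
    exact tendsto_const_nhds
  rw [coeff_one, if_neg hi.ne']
  have hbound (n : ℕ) : ‖coeff i ((p : ℚ_[p])⁻¹ • qSeries p (n + 1))‖ ≤
      ‖(p : ℚ_[p])⁻¹‖ * (‖(p : ℚ_[p]) ^ n‖ / ‖(i : ℚ_[p])‖) := by
    rw [coeff_smul, smul_eq_mul, norm_mul]
    gcongr
    exact norm_coeff_qSeries_le n hi.ne'
  refine squeeze_zero_norm hbound ?_
  have h := ((tendsto_pow_atTop_nhds_zero_of_norm_lt_one (Padic.norm_p_lt_one (p := p))).norm
    |>.div_const ‖(i : ℚ_[p])‖).const_mul ‖(p : ℚ_[p])⁻¹‖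
  rwa [norm_zero, zero_div, mul_zero] at h

theorem congr_lambdaPlus : CongrOneAddMonomial (p - 1) 0 (lambdaPlus p) := by
  have hp := (Fact.out : p.Prime).two_le
  have hf := multipliable_of_tendsto_one ((tendsto_inv_smul_qSeries (p := p)).comp
    (tendsto_atTop_mono (fun n => (by omega : n ≤ 2 * (n + 1))) tendsto_id))
  exact (isClosed_setOf_congrOneAddMonomial _ _).mem_of_tendsto hf.hasProd
    (Eventually.of_forall fun s => CongrOneAddMonomial.prod (by omega) fun n _ =>
      congr_inv_smul_qSeries (n := 2 * (n + 1)) (by omega))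

theorem congr_lambdaMinus : CongrOneAddMonomial (p - 1) (p : ℚ_[p])⁻¹ (lambdaMinus p) := by
  have hp := (Fact.out : p.Prime).two_le
  have hf := multipliable_of_tendsto_one ((tendsto_inv_smul_qSeries (p := p)).comp
    (tendsto_atTop_mono (fun n => (by omega : n ≤ 2 * n + 1)) tendsto_id))
  refine (isClosed_setOf_congrOneAddMonomial _ _).mem_of_tendsto hf.hasProd
    ((eventually_ge_atTop {0}).mono fun s hs => ?_)
  have htail : CongrOneAddMonomial (p - 1) 0
      (∏ n ∈ s.erase 0, (p : ℚ_[p])⁻¹ • qSeries p (2 * n + 1)) :=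
    CongrOneAddMonomial.prod (by omega) fun n hn =>
      congr_inv_smul_qSeries (by have := ne_of_mem_erase hn; omega)
  have h := congr_inv_smul_qSeries_one.mul (by omega) htail
  rw [add_zero] at h
  show CongrOneAddMonomial _ _ (∏ n ∈ s, (p : ℚ_[p])⁻¹ • qSeries p (2 * n + 1))
  rwa [← mul_prod_erase s _ (singleton_subset_iff.1 hs)]

end Padic

theorem coeffs_of_lambda_ratio_pow_integral_and_leading_general
    (p : ℕ) [Fact p.Prime] (k : ℕ) (hk₁ : p + 2 ≤ k) :
    (∀ i ≤ p - 2,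
      ‖PowerSeries.coeff (R := ℚ_[p]) i ((lambdaMinus p * (lambdaPlus p)⁻¹) ^ (k - 1))‖ ≤ 1) ∧
    ‖PowerSeries.coeff (R := ℚ_[p]) (p - 1) ((lambdaMinus p * (lambdaPlus p)⁻¹) ^ (k - 1)) -
        ((k : ℚ_[p]) - 1) / (p : ℚ_[p])‖ ≤ 1 := by
  have hp := (Fact.out : p.Prime).two_le
  have hratio : CongrOneAddMonomial (p - 1) (p : ℚ_[p])⁻¹ (lambdaMinus p * (lambdaPlus p)⁻¹) := by
    simpa using congr_lambdaMinus.mul (by omega) congr_lambdaPlus.inv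
  have hpow := hratio.pow (by omega) (k - 1)
  rw [Nat.cast_sub (by omega), Nat.cast_one, ← div_eq_mul_inv] at hpow
  exact ⟨fun i hi => hpow.norm_coeff_le (by omega), hpow.norm_coeff_sub_le⟩

/-- If `p + 2 ≤ k ≤ 2p - 1` and `(λ₋ · λ₊⁻¹)^(k-1) = Σ c_i X^i`, then `c_i ∈ ℤ_p`
for `0 ≤ i ≤ p - 2`, and `c_{p-1} - (k-1)/p ∈ ℤ_p`. -/
theorem coeffs_of_lambda_ratio_pow_integral_and_leading
    (p : ℕ) [Fact p.Prime] (k : ℕ) (hk₁ : p + 2 ≤ k) (hk₂ : k ≤ 2 * p - 1) :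
    (∀ i ≤ p - 2,
      ‖PowerSeries.coeff (R := ℚ_[p]) i ((lambdaMinus p * (lambdaPlus p)⁻¹) ^ (k - 1))‖ ≤ 1) ∧
    ‖PowerSeries.coeff (R := ℚ_[p]) (p - 1) ((lambdaMinus p * (lambdaPlus p)⁻¹) ^ (k - 1)) -
        ((k : ℚ_[p]) - 1) / (p : ℚ_[p])‖ ≤ 1 :=
  coeffs_of_lambda_ratio_pow_integral_and_leading_general p k hk₁
end

section
/- Let p be a prime and F a field of characteristic p. Let Q ∈ M₂(F[[X]]) be a matrix whose constant-coefficient matrix Q(0) ∈ M₂(F) is invertible and is similar over F to the diagonal matrix diag(λ, μ) for some λ, μ ∈ F. Then there exists an invertible matrix M ∈ M₂(F[[X]]) such that Q·φ(M) = M·diag(λ, μ). -/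
/-!
Write `D = diag(λ, μ)` and `M = Σ_j M_j X^j`. Comparing coefficients of `X^j`, the equation
`Q φ(M) = M D` says `M_j D = Σ_{pn ≤ j} Q_{j-pn} M_n`. For `j = 0` this is `Q(0) S = S D`,
solved by the conjugating matrix `M_0 = S`; for `j ≥ 1` every `n` on the right satisfies
`n ≤ j/p < j` because `p ≥ 2`, so `M_j` is determined recursively after multiplying by
`D⁻¹` (`D` is invertible since it is conjugate to `Q(0)`). Finally `M` is invertible because
`M(0) = S` is.
-/

open PowerSeries

/-- Substitution of the power series `g` (of positive order) into `f`: the coefficient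
of `X^j` in `f(g)` is `Σ_{n ≤ j} f_n · [X^j](g^n)`. -/
noncomputable def substSeries {R : Type*} [CommRing R] (g f : PowerSeries R) :
    PowerSeries R :=
  PowerSeries.mk fun j =>
    ∑ n ∈ Finset.range (j + 1),
      PowerSeries.coeff n f * PowerSeries.coeff j (g ^ n)

/-- `φ : F[[X]] → F[[X]]` is the substitution `X ↦ X^p` (the reduction mod `p` of
`X ↦ (1+X)^p - 1`). -/
noncomputable def phiP (p : ℕ) {F : Type*} [CommRing F] (f : PowerSeries F) :
    PowerSeries F :=
  substSeries (PowerSeries.X ^ p) f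

open Finset

theorem phiP_eq_expand {R : Type*} [CommRing R] {p : ℕ} (hp : p ≠ 0) (f : R⟦X⟧) :
    phiP p f = expand p hp f := by
  have hp' := Nat.pos_of_ne_zero hp
  ext j
  simp only [phiP, substSeries, coeff_mk, ← pow_mul, coeff_X_pow, mul_ite, mul_one, mul_zero,
    coeff_expand]
  split_ifs with h
  · obtain ⟨m, rfl⟩ := h
    simp_rw [Nat.mul_div_cancel_left m hp', Nat.mul_left_cancel_iff hp', sum_ite_eq, mem_range,
      if_pos (Nat.lt_succ_of_le (Nat.le_mul_of_pos_left m hp'))]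
  · exact sum_eq_zero fun n _ => if_neg fun hn => h ⟨n, hn⟩

theorem coeff_mul_expand {R : Type*} [CommRing R] {p : ℕ} (hp : p ≠ 0) (f g : R⟦X⟧)
    (j : ℕ) :
    coeff j (f * expand p hp g) = ∑ n ∈ range (j / p + 1), coeff (j - p * n) f * coeff n g := by
  have hp' := Nat.pos_of_ne_zero hp
  have mem_iff (n : ℕ) : n ∈ range (j / p + 1) ↔ p * n ≤ j := by
    rw [mem_range, Nat.lt_succ_iff, Nat.le_div_iff_mul_le hp', mul_comm]
  have hsub : (range (j / p + 1)).image (p * ·) ⊆ range (j + 1) := by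
    intro k hk
    obtain ⟨n, hn, rfl⟩ := mem_image.mp hk
    exact mem_range.mpr (Nat.lt_succ_of_le ((mem_iff n).mp hn))
  rw [mul_comm, coeff_mul, Nat.sum_antidiagonal_eq_sum_range_succ
    (fun a b => coeff a (expand p hp g) * coeff b f), ← sum_subset hsub,
    sum_image fun a _ b _ h => Nat.eq_of_mul_eq_mul_left hp' h]
  · simp only [coeff_expand_mul, mul_comm]
  · intro k hk hk_not_image
    rw [coeff_expand_of_not_dvd p hp g, zero_mul]
    rintro ⟨n, rfl⟩
    exact hk_not_image
      (mem_image_of_mem _ ((mem_iff n).mpr (Nat.lt_succ_iff.mp (mem_range.mp hk))))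

section FrobeniusRecursion

variable {R : Type*} [Ring R] (p : ℕ) (Qc : ℕ → R) (S Dinv : R)

/-- The guard `n < j + 1` is only there for termination: it always holds when `2 ≤ p`. -/
noncomputable def frobeniusEigenCoeff : ℕ → R
  | 0 => S
  | j + 1 => (∑ n ∈ range ((j + 1) / p + 1),
      if n < j + 1 then Qc (j + 1 - p * n) * frobeniusEigenCoeff n else 0) * Dinv

theorem frobeniusEigenCoeff_zero : frobeniusEigenCoeff p Qc S Dinv 0 = S := by
  rw [frobeniusEigenCoeff]

variable {p Qc S Dinv}

theorem frobeniusEigenCoeff_mul (hp : 2 ≤ p) {D : R} (hD : Dinv * D = 1) (hS : Qc 0 * S = S * D)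
    (j : ℕ) : frobeniusEigenCoeff p Qc S Dinv j * D =
      ∑ n ∈ range (j / p + 1), Qc (j - p * n) * frobeniusEigenCoeff p Qc S Dinv n := by
  cases j with
  | zero => simp [frobeniusEigenCoeff_zero, hS]
  | succ j =>
    rw [frobeniusEigenCoeff, mul_assoc, hD, mul_one]
    refine sum_congr rfl fun n hn => if_pos ?_
    have := Nat.div_le_div_left hp two_pos (a := j + 1)
    have := mem_range.mp hn
    omega

end FrobeniusRecursion

namespace Matrix

variable {m n l : Type*} {R : Type*} [CommRing R]

theorem ext_powerSeries_coeff {M N : Matrix m n R⟦X⟧}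
    (h : ∀ j, M.map (coeff j) = N.map (coeff j)) : M = N := by
  ext i k j
  exact congrFun₂ (h j) i k

theorem map_coeff_mul_map_expand [Fintype m] {p : ℕ} (hp : p ≠ 0) (Q : Matrix l m R⟦X⟧)
    (M : Matrix m n R⟦X⟧) (j : ℕ) :
    (Q * M.map (expand p hp)).map (coeff j) =
      ∑ k ∈ range (j / p + 1), Q.map (coeff (j - p * k)) * M.map (coeff k) := by
  ext i i'
  simp only [map_apply, mul_apply, map_sum, coeff_mul_expand, sum_apply]
  exact sum_comm

theorem map_coeff_mul_map_C [Fintype m] (M : Matrix l m R⟦X⟧) (N : Matrix m n R) (j : ℕ) :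
    (M * N.map (C (R := R))).map (coeff j) = M.map (coeff j) * N := by
  ext i k
  simp only [map_apply, mul_apply, map_sum, coeff_mul_C]

def powerSeriesMk (c : ℕ → Matrix m n R) : Matrix m n R⟦X⟧ :=
  of fun i k => mk fun j => c j i k

@[simp]
theorem map_coeff_powerSeriesMk (c : ℕ → Matrix m n R) (j : ℕ) :
    (powerSeriesMk c).map (coeff j) = c j := by
  ext i k
  simp [powerSeriesMk]

theorem isUnit_of_isUnit_map_constantCoeff [Fintype m] [DecidableEq m] {K : Type*} [Field K]
    {M : Matrix m m K⟦X⟧} (h : IsUnit (M.map constantCoeff)) : IsUnit M := by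
  rwa [isUnit_iff_isUnit_det, isUnit_iff_constantCoeff, RingHom.map_det, RingHom.mapMatrix_apply,
    ← isUnit_iff_isUnit_det]

end Matrix

theorem exists_diagonalization_general (p : ℕ) (hp : p.Prime) (F : Type*) [Field F]
    (Q : Matrix (Fin 2) (Fin 2) (PowerSeries F)) (lam mu : F)
    (hQ : IsUnit (Q.map (PowerSeries.constantCoeff (R := F))))
    (hsim : ∃ S : Matrix (Fin 2) (Fin 2) F, IsUnit S ∧
      Q.map (PowerSeries.constantCoeff (R := F)) = S * Matrix.diagonal ![lam, mu] * S⁻¹) :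
    ∃ M : Matrix (Fin 2) (Fin 2) (PowerSeries F), IsUnit M ∧
      Q * M.map (phiP p) =
        M * Matrix.diagonal ![PowerSeries.C (R := F) lam, PowerSeries.C (R := F) mu] := by
  obtain ⟨S, hS, hQ0⟩ := hsim
  set D := Matrix.diagonal ![lam, mu]
  rw [← coeff_zero_eq_constantCoeff] at hQ hQ0
  have hD : IsUnit D.det := by
    rwa [← Matrix.det_conj hS, ← hQ0, ← Matrix.isUnit_iff_isUnit_det]
  have hQS : Q.map (coeff 0) * S = S * D := by
    rw [hQ0, Matrix.nonsing_inv_mul_cancel_right _ _ ((Matrix.isUnit_iff_isUnit_det S).mp hS)]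
  set M := Matrix.powerSeriesMk (frobeniusEigenCoeff p (fun n => Q.map (coeff n)) S D⁻¹)
  refine ⟨M, Matrix.isUnit_of_isUnit_map_constantCoeff ?_, ?_⟩
  · rwa [← coeff_zero_eq_constantCoeff, Matrix.map_coeff_powerSeriesMk, frobeniusEigenCoeff_zero]
  have hdiag : Matrix.diagonal ![C lam, C mu] = D.map (C (R := F)) := by
    rw [Matrix.diagonal_map (map_zero _)]
    congr 1
    ext i
    fin_cases i <;> rfl
  have hphi : M.map (phiP p) = M.map (expand p hp.ne_zero) := by
    simp_rw [funext (phiP_eq_expand (R := F) hp.ne_zero)]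
  refine Matrix.ext_powerSeries_coeff fun j => ?_
  rw [hphi, hdiag, Matrix.map_coeff_mul_map_expand, Matrix.map_coeff_mul_map_C]
  simp only [M, Matrix.map_coeff_powerSeriesMk]
  exact (frobeniusEigenCoeff_mul (Qc := fun n => Q.map (coeff n)) hp.two_le
    (Matrix.nonsing_inv_mul D hD) hQS j).symm

/-- If `Q(0)` is invertible and similar over `F` to `diag(λ, μ)`, then there is an
invertible `M ∈ M₂(F[[X]])` with `Q·φ(M) = M·diag(λ, μ)`. -/
theorem exists_diagonalization (p : ℕ) (hp : p.Prime) (F : Type*) [Field F] [CharP F p]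
    (Q : Matrix (Fin 2) (Fin 2) (PowerSeries F)) (lam mu : F)
    (hQ : IsUnit (Q.map (PowerSeries.constantCoeff (R := F))))
    (hsim : ∃ S : Matrix (Fin 2) (Fin 2) F, IsUnit S ∧
      Q.map (PowerSeries.constantCoeff (R := F)) = S * Matrix.diagonal ![lam, mu] * S⁻¹) :
    ∃ M : Matrix (Fin 2) (Fin 2) (PowerSeries F), IsUnit M ∧
      Q * M.map (phiP p) =
        M * Matrix.diagonal ![PowerSeries.C (R := F) lam, PowerSeries.C (R := F) mu] :=
  exists_diagonalization_general p hp F Q lam mu hQ hsim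
end
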